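/- For all x=(x₂,x₃)∈ℝ², v>0 and s∈ℝ, writing y(s) = (x₂·cosh s − x₃·sinh s, −x₂·sinh s + x₃·cosh s), c⁰(u) = 2^{−3/2}·(4u₂² − 1/π)·e^{−2π u₃²}, ψ_A⁰(u) = −(1/√2)·u₂·u₃·e^{−2π u₃²} and ψ_B⁰(u) = (1/(4√2·π))·e^{−2π u₃²}, the following two identities hold: v^{3/2}·∂/∂v [ v^{−1/2}·cosh(s)·c⁰(√v·y(s)) ] = ∂/∂s [ cosh(s)·ψ_A⁰(√v·y(s)) + sinh(s)·ψ_B⁰(√v·y(s)) ] and v^{3/2}·∂/∂v [ v^{−1/2}·sinh(s)·c⁰(√v·y(s)) ] = ∂/∂s [ sinh(s)·ψ_A⁰(√v·y(s)) + cosh(s)·ψ_B⁰(√v·y(s)) ]. (This is the explicit coordinate form of paper Theorem 5.6: ω(L)φ₁,₁ = d ψ₀,₁ on the symmetric space D_W ≅ ℝ of SO₀(1,1).) -/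

import Mathlib

/-!
Write `u = √v · y(s)`. Both sides of each identity equal `p(s) · Ω(u)` for one explicit
Schwartz function `Ω`, where `(p, q)` is `(cosh, sinh)` or `(sinh, cosh)`.
On the `s`-side this is because `s ↦ u = (u₁, u₂)` is an integral curve of the boost field
`(u₁, u₂) ↦ -(u₂, u₁)`, along which `ψ_B⁰' = -ψ_A⁰` and `ψ_A⁰' = Ω - ψ_B⁰`; since `p' = q`
and `q' = p`, all terms except `p Ω` cancel. On the `v`-side, `v ↦ v^{-1/2} c⁰(√v y)` is
`w ↦ w⁻¹ c⁰(w y)` composed with `√·`, and its derivative is computed directly.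
-/

open MeasureTheory

/-- `y(s) = m(-s)x` for `x = (x₂,x₃)` in the Minkowski plane of signature `(1,1)`. -/
noncomputable def yv (x₂ x₃ s : ℝ) : ℝ × ℝ :=
  (x₂ * Real.cosh s - x₃ * Real.sinh s, -x₂ * Real.sinh s + x₃ * Real.cosh s)

/-- The coefficient `c⁰` of the Kudla–Millson Schwartz form `φ⁰₁,₁`. -/
noncomputable def c0 (u : ℝ × ℝ) : ℝ :=
  (2:ℝ) ^ (-(3:ℝ)/2) * (4 * u.1 ^ 2 - 1 / Real.pi) * Real.exp (-(2 * Real.pi * u.2 ^ 2))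

/-- The `e₂`-component `ψ_A⁰` of `ψ⁰₀,₁`. -/
noncomputable def psiA0 (u : ℝ × ℝ) : ℝ :=
  -(1 / Real.sqrt 2) * u.1 * u.2 * Real.exp (-(2 * Real.pi * u.2 ^ 2))

/-- The `e₃`-component `ψ_B⁰` of `ψ⁰₀,₁`. -/
noncomputable def psiB0 (u : ℝ × ℝ) : ℝ :=
  1 / (4 * Real.sqrt 2 * Real.pi) * Real.exp (-(2 * Real.pi * u.2 ^ 2))

open Real

/-- The `Ω` above: the coefficient of `ω(L)φ⁰₁,₁`. -/
noncomputable def omegaLc0 (u : ℝ × ℝ) : ℝ :=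
  1 / √2 * (u.1 ^ 2 + u.2 ^ 2 - 4 * π * u.1 ^ 2 * u.2 ^ 2 + 1 / (4 * π)) *
    exp (-(2 * π * u.2 ^ 2))

lemma two_rpow_neg_three_halves : (2 : ℝ) ^ (-(3 : ℝ) / 2) = 1 / (2 * √2) := by
  rw [rpow_div_two_eq_sqrt _ zero_le_two, rpow_neg (sqrt_nonneg 2),
    show (3 : ℝ) = (2 : ℕ) + (1 : ℕ) by norm_num, rpow_add_natCast' (sqrt_nonneg 2) (by norm_num),
    rpow_natCast, sq_sqrt zero_le_two, pow_one, one_div]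

lemma hasDerivAt_inv_mul_c0_smul (a b : ℝ) {w : ℝ} (hw : w ≠ 0) :
    HasDerivAt (fun w' => w'⁻¹ * c0 (w' * a, w' * b)) (2 * omegaLc0 (w * a, w * b) / w ^ 2) w := by
  have hpoly := ((((hasDerivAt_id' w).mul_const a).pow 2).const_mul 4).sub_const (1 / π)
  have hgauss := (((((hasDerivAt_id' w).mul_const b).pow 2).const_mul (2 * π)).neg).exp
  refine ((hasDerivAt_inv hw).mul
    ((hpoly.const_mul ((2 : ℝ) ^ (-(3 : ℝ) / 2))).mul hgauss)).congr_deriv ?_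
  simp only [omegaLc0, two_rpow_neg_three_halves, Pi.mul_apply, Pi.pow_apply, Pi.neg_apply]
  field_simp
  ring

lemma hasDerivAt_rpow_neg_half_mul_c0_sqrt_smul (a b : ℝ) {v : ℝ} (hv : 0 < v) :
    HasDerivAt (fun v' : ℝ => v' ^ (-(1 : ℝ) / 2) * c0 (√v' * a, √v' * b))
      (omegaLc0 (√v * a, √v * b) / v ^ ((3 : ℝ) / 2)) v := by
  have hw : √v ≠ 0 := (sqrt_pos.mpr hv).ne'
  have hcomp := (hasDerivAt_inv_mul_c0_smul a b hw).comp v (hasDerivAt_sqrt hv.ne')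
  have hrpow : ∀ v' : ℝ, 0 < v' → v' ^ (-(1 : ℝ) / 2) = (√v')⁻¹ := fun v' hv' => by
    rw [rpow_div_two_eq_sqrt _ hv'.le, rpow_neg_one]
  refine (hcomp.congr_deriv ?_).congr_of_eventuallyEq
    ((eventually_gt_nhds hv).mono fun v' hv' => by simp only [Function.comp, hrpow v' hv'])
  rw [rpow_div_two_eq_sqrt _ hv.le, show (3 : ℝ) = (3 : ℕ) by norm_num, rpow_natCast]
  field_simp

section BoostFlow

variable {u₁ u₂ : ℝ → ℝ} {s : ℝ}

lemma hasDerivAt_psiB0_of_boost (h₂ : HasDerivAt u₂ (-u₁ s) s) :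
    HasDerivAt (fun s' => psiB0 (u₁ s', u₂ s')) (-psiA0 (u₁ s, u₂ s)) s := by
  refine ((((h₂.pow 2).const_mul (2 * π)).neg.exp).const_mul (1 / (4 * √2 * π))).congr_deriv ?_
  simp only [psiA0, Pi.pow_apply, Pi.neg_apply]
  field_simp
  ring

lemma hasDerivAt_psiA0_of_boost (h₁ : HasDerivAt u₁ (-u₂ s) s) (h₂ : HasDerivAt u₂ (-u₁ s) s) :
    HasDerivAt (fun s' => psiA0 (u₁ s', u₂ s'))
      (omegaLc0 (u₁ s, u₂ s) - psiB0 (u₁ s, u₂ s)) s := by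
  refine (((h₁.const_mul (-(1 / √2))).mul h₂).mul
    (((h₂.pow 2).const_mul (2 * π)).neg.exp)).congr_deriv ?_
  simp only [omegaLc0, psiB0, Pi.mul_apply, Pi.pow_apply, Pi.neg_apply]
  field_simp
  ring

lemma hasDerivAt_mul_psiA0_add_mul_psiB0_of_boost {p q : ℝ → ℝ} (hp : HasDerivAt p (q s) s)
    (hq : HasDerivAt q (p s) s) (h₁ : HasDerivAt u₁ (-u₂ s) s) (h₂ : HasDerivAt u₂ (-u₁ s) s) :
    HasDerivAt (fun s' => p s' * psiA0 (u₁ s', u₂ s') + q s' * psiB0 (u₁ s', u₂ s'))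
      (p s * omegaLc0 (u₁ s, u₂ s)) s :=
  ((hp.mul (hasDerivAt_psiA0_of_boost h₁ h₂)).add
    (hq.mul (hasDerivAt_psiB0_of_boost h₂))).congr_deriv (by ring)

end BoostFlow

lemma hasDerivAt_mul_yv_fst (w x₂ x₃ s : ℝ) :
    HasDerivAt (fun s' => w * (yv x₂ x₃ s').1) (-(w * (yv x₂ x₃ s).2)) s := by
  refine ((((hasDerivAt_cosh s).const_mul x₂).sub
    ((hasDerivAt_sinh s).const_mul x₃)).const_mul w).congr_deriv ?_
  simp only [yv]
  ring

lemma hasDerivAt_mul_yv_snd (w x₂ x₃ s : ℝ) :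
    HasDerivAt (fun s' => w * (yv x₂ x₃ s').2) (-(w * (yv x₂ x₃ s).1)) s := by
  refine ((((hasDerivAt_sinh s).const_mul (-x₂)).add
    ((hasDerivAt_cosh s).const_mul x₃)).const_mul w).congr_deriv ?_
  simp only [yv]
  ring

lemma exists_lowering_eq_dpsi (x₂ x₃ : ℝ) {v : ℝ} (hv : 0 < v) (s : ℝ) {p q : ℝ → ℝ}
    (hp : HasDerivAt p (q s) s) (hq : HasDerivAt q (p s) s) :
    ∃ dv ds : ℝ,
      HasDerivAt (fun v' : ℝ => v' ^ (-(1 : ℝ) / 2) * p s *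
        c0 (√v' * (yv x₂ x₃ s).1, √v' * (yv x₂ x₃ s).2)) dv v ∧
      HasDerivAt (fun s' : ℝ =>
        p s' * psiA0 (√v * (yv x₂ x₃ s').1, √v * (yv x₂ x₃ s').2)
        + q s' * psiB0 (√v * (yv x₂ x₃ s').1, √v * (yv x₂ x₃ s').2))
        ds s ∧
      v ^ ((3 : ℝ) / 2) * dv = ds := by
  set u := (√v * (yv x₂ x₃ s).1, √v * (yv x₂ x₃ s).2)
  have hv₃ : v ^ ((3 : ℝ) / 2) ≠ 0 := (rpow_pos_of_pos hv _).ne'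
  refine ⟨p s * (omegaLc0 u / v ^ ((3 : ℝ) / 2)), p s * omegaLc0 u, ?_,
    hasDerivAt_mul_psiA0_add_mul_psiB0_of_boost hp hq (hasDerivAt_mul_yv_fst _ _ _ s)
      (hasDerivAt_mul_yv_snd _ _ _ s), by field_simp⟩
  exact ((hasDerivAt_rpow_neg_half_mul_c0_sqrt_smul _ _ hv).const_mul (p s)).congr_of_eventuallyEq
    (.of_eq (funext fun v' => by ring))

/-- Paper Theorem 5.6 in coordinates (`ω(L)φ₁,₁ = dψ₀,₁` on `D_W ≅ ℝ`): the two
identities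
`v^{3/2}·∂/∂v [v^{-1/2}·cosh(s)·c⁰(√v·y(s))] = ∂/∂s [cosh(s)·ψ_A⁰(√v·y(s)) + sinh(s)·ψ_B⁰(√v·y(s))]`
and
`v^{3/2}·∂/∂v [v^{-1/2}·sinh(s)·c⁰(√v·y(s))] = ∂/∂s [sinh(s)·ψ_A⁰(√v·y(s)) + cosh(s)·ψ_B⁰(√v·y(s))]`. -/
theorem stmt18 (x₂ x₃ v s : ℝ) (hv : 0 < v) :
    (∃ dv ds : ℝ,
      HasDerivAt (fun v' : ℝ => v' ^ (-(1:ℝ)/2) * Real.cosh s *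
        c0 (Real.sqrt v' * (yv x₂ x₃ s).1, Real.sqrt v' * (yv x₂ x₃ s).2)) dv v ∧
      HasDerivAt (fun s' : ℝ =>
        Real.cosh s' * psiA0 (Real.sqrt v * (yv x₂ x₃ s').1, Real.sqrt v * (yv x₂ x₃ s').2)
        + Real.sinh s' * psiB0 (Real.sqrt v * (yv x₂ x₃ s').1, Real.sqrt v * (yv x₂ x₃ s').2))
        ds s ∧
      v ^ ((3:ℝ)/2) * dv = ds) ∧
    (∃ dv ds : ℝ,
      HasDerivAt (fun v' : ℝ => v' ^ (-(1:ℝ)/2) * Real.sinh s *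
        c0 (Real.sqrt v' * (yv x₂ x₃ s).1, Real.sqrt v' * (yv x₂ x₃ s).2)) dv v ∧
      HasDerivAt (fun s' : ℝ =>
        Real.sinh s' * psiA0 (Real.sqrt v * (yv x₂ x₃ s').1, Real.sqrt v * (yv x₂ x₃ s').2)
        + Real.cosh s' * psiB0 (Real.sqrt v * (yv x₂ x₃ s').1, Real.sqrt v * (yv x₂ x₃ s').2))
        ds s ∧
      v ^ ((3:ℝ)/2) * dv = ds) :=
  ⟨exists_lowering_eq_dpsi x₂ x₃ hv s (hasDerivAt_cosh s) (hasDerivAt_sinh s),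
   exists_lowering_eq_dpsi x₂ x₃ hv s (hasDerivAt_sinh s) (hasDerivAt_cosh s)⟩
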